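/- An equivalence relation ≈ on the free semigroup E⁺ is a congruence if and only if ≈ equals the invariant closure (≈_min)^ic of its minimal part ≈_min. -/

import Mathlib

def FS (E : Type*) := {l : List E // l ≠ []}

def fsMul {E : Type*} (u v : FS E) : FS E := ⟨u.1 ++ v.1, by simp [u.2]⟩

def prepend {E : Type*} (a : E) (u : FS E) : FS E := ⟨a :: u.1, by simp⟩

def append {E : Type*} (u : FS E) (a : E) : FS E := ⟨u.1 ++ [a], by simp⟩

/-- `u ≈_min v`: `u ≈ v`, and they do not share a strippable common first letter
nor a strippable common last letter. -/
def rMin {E : Type*} (r : FS E → FS E → Prop) (u v : FS E) : Prop :=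
  r u v ∧
  ¬ (∃ (a : E) (u' v' : FS E), u = prepend a u' ∧ v = prepend a v' ∧ r u' v') ∧
  ¬ (∃ (b : E) (u'' v'' : FS E), u = append u'' b ∧ v = append v'' b ∧ r u'' v'')

/-- Surround a word by lists of letters on both sides. -/
def surround {E : Type*} (as : List E) (u : FS E) (bs : List E) : FS E :=
  ⟨as ++ u.1 ++ bs, by simp [u.2]⟩

/-- Invariant closure of a relation on `E⁺`. -/
def invClosure {E : Type*} (r : FS E → FS E → Prop) (u v : FS E) : Prop :=
  ∃ (as bs : List E) (u' v' : FS E),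
    u = surround as u' bs ∧ v = surround as v' bs ∧ r u' v'

/-!
Every pair `u ≈ v` is obtained from a pair in `≈_min` by surrounding it with letters: as long as
`u, v` share a first (or last) letter whose removal leaves related words, strip it; the lengths
decrease, and where stripping stops the pair lies in `≈_min`. This gives `≈ ⊆ (≈_min)^ic` for any
relation. Conversely, an invariant closure is stable under multiplication on both sides, and a
congruence is stable under surrounding, so it contains the invariant closure of any subrelation.
-/

namespace FS

variable {E : Type*}

@[ext]
lemma ext {u v : FS E} (h : u.1 = v.1) : u = v := Subtype.ext h

@[simp]
lemma surround_nil (u : FS E) : surround [] u [] = u := by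
  ext; simp [surround]

lemma surround_surround (as as' bs bs' : List E) (u : FS E) :
    surround as (surround as' u bs') bs = surround (as ++ as') u (bs' ++ bs) := by
  ext; simp [surround]

lemma prepend_eq_surround (a : E) (u : FS E) : prepend a u = surround [a] u [] := by
  ext; simp [prepend, surround]

lemma append_eq_surround (u : FS E) (b : E) : append u b = surround [] u [b] := by
  ext; simp [append, surround]

@[simp]
lemma val_prepend (a : E) (u : FS E) : (prepend a u).1 = a :: u.1 := rfl

@[simp]
lemma val_append (u : FS E) (b : E) : (append u b).1 = u.1 ++ [b] := rfl

lemma fsMul_eq_surround_right (u w : FS E) : fsMul u w = surround [] u w.1 := by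
  ext; simp [fsMul, surround]

lemma fsMul_eq_surround_left (w u : FS E) : fsMul w u = surround w.1 u [] := by
  ext; simp [fsMul, surround]

end FS

open FS

section

variable {E : Type*}

lemma invClosure_of_rel {s : FS E → FS E → Prop} {u v : FS E} (h : s u v) :
    invClosure s u v :=
  ⟨[], [], u, v, (surround_nil u).symm, (surround_nil v).symm, h⟩

lemma invClosure.surround {s : FS E → FS E → Prop} {u v : FS E} (h : invClosure s u v)
    (as bs : List E) : invClosure s (surround as u bs) (surround as v bs) := by
  obtain ⟨as', bs', u', v', rfl, rfl, h'⟩ := h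
  exact ⟨as ++ as', bs' ++ bs, u', v', surround_surround .., surround_surround .., h'⟩

lemma invClosure_rMin_of_rel (r : FS E → FS E → Prop) {u v : FS E} (h : r u v) :
    invClosure (rMin r) u v := by
  by_cases hpre : ∃ (a : E) (u' v' : FS E), u = prepend a u' ∧ v = prepend a v' ∧ r u' v'
  · obtain ⟨a, u', v', rfl, rfl, h'⟩ := hpre
    simpa only [prepend_eq_surround] using (invClosure_rMin_of_rel r h').surround [a] []
  by_cases happ : ∃ (b : E) (u'' v'' : FS E), u = append u'' b ∧ v = append v'' b ∧ r u'' v''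
  · obtain ⟨b, u', v', rfl, rfl, h'⟩ := happ
    simpa only [append_eq_surround] using (invClosure_rMin_of_rel r h').surround [] [b]
  exact invClosure_of_rel ⟨h, hpre, happ⟩
termination_by u.1.length + v.1.length
decreasing_by
  all_goals
    subst_vars
    simp only [val_prepend, val_append, List.length_cons, List.length_append]
    omega

lemma congr_of_forall_iff_invClosure {r s : FS E → FS E → Prop}
    (h : ∀ u v, r u v ↔ invClosure s u v) {u v w : FS E} (huv : r u v) :
    r (fsMul u w) (fsMul v w) ∧ r (fsMul w u) (fsMul w v) := by
  rw [fsMul_eq_surround_right, fsMul_eq_surround_right, fsMul_eq_surround_left,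
    fsMul_eq_surround_left, h, h]
  exact ⟨((h u v).1 huv).surround [] w.1, ((h u v).1 huv).surround w.1 []⟩

section Congruence

variable {r : FS E → FS E → Prop}
  (hcong : ∀ u v w : FS E, r u v → r (fsMul u w) (fsMul v w) ∧ r (fsMul w u) (fsMul w v))
include hcong

lemma rel_surround_of_congr {u v : FS E} (h : r u v) (as bs : List E) :
    r (surround as u bs) (surround as v bs) := by
  have hR (x y w : FS E) (hxy : r x y) : r (surround [] x w.1) (surround [] y w.1) := by
    simpa only [fsMul_eq_surround_right] using (hcong x y w hxy).1
  have hL (x y w : FS E) (hxy : r x y) : r (surround w.1 x []) (surround w.1 y []) := by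
    simpa only [fsMul_eq_surround_left] using (hcong x y w hxy).2
  have hright : r (surround [] u bs) (surround [] v bs) := by
    rcases bs with _ | ⟨b, bs⟩
    · simpa using h
    · exact hR u v ⟨b :: bs, by simp⟩ h
  have hsplit (w : FS E) : surround as w bs = surround as (surround [] w bs) [] := by
    rw [surround_surround, List.append_nil, List.append_nil]
  rw [hsplit u, hsplit v]
  rcases as with _ | ⟨a, as⟩
  · simpa using hright
  · exact hL _ _ ⟨a :: as, by simp⟩ hright

lemma rel_of_invClosure_of_congr {s : FS E → FS E → Prop} (hsr : ∀ u v, s u v → r u v)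
    {u v : FS E} (h : invClosure s u v) : r u v := by
  obtain ⟨as, bs, u', v', rfl, rfl, h'⟩ := h
  exact rel_surround_of_congr hcong (hsr _ _ h') as bs

end Congruence

end

theorem congruence_iff_invClosure_rMin_general {E : Type*} (r : FS E → FS E → Prop) :
    (∀ u v w : FS E, r u v → r (fsMul u w) (fsMul v w) ∧ r (fsMul w u) (fsMul w v)) ↔
    (∀ u v : FS E, r u v ↔ invClosure (rMin r) u v) := by
  constructor
  · intro hcong u v
    exact ⟨invClosure_rMin_of_rel r, rel_of_invClosure_of_congr hcong fun _ _ hmin => hmin.1⟩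
  · intro h u v w
    exact congr_of_forall_iff_invClosure h

/-- An equivalence relation on the free semigroup `E⁺` is a congruence iff it
equals the invariant closure of its minimal part `≈_min`. -/
theorem congruence_iff_invClosure_rMin {E : Type*} (r : FS E → FS E → Prop)
    (hequiv : Equivalence r) :
    (∀ u v w : FS E, r u v → r (fsMul u w) (fsMul v w) ∧ r (fsMul w u) (fsMul w v)) ↔
    (∀ u v : FS E, r u v ↔ invClosure (rMin r) u v) :=
  congruence_iff_invClosure_rMin_general r
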